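/- Let a ≥ 1 be an integer, let I = (x^{2a+1}, x^{a+1}y^a, x^a y^{a+1}, y^{2a+1}) ⊂ K[x,y] and J = (x^{2a+1}, y^{2a+1}). Then J is a (minimal) reduction ideal of I with reduction number r_J(I) = a; that is, I^{a+1} = JI^a, and I^k ≠ JI^{k−1} for all 1 ≤ k ≤ a. In fact (x^a y^{a+1})^k ∈ I^k \ JI^{k−1} for all such k. -/

import Mathlib

open MvPolynomial Pointwise

namespace Stmt16Aux

variable {K : Type} [Field K]

/-- The ideal of polynomials all of whose monomials are divisible by some
monomial with exponent pair in `A`. -/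
def up (K : Type) [Field K] (A : Set (ℕ × ℕ)) : Ideal (MvPolynomial (Fin 2) K) where
  carrier := {z | ∀ ν ∈ z.support, ∃ γ ∈ A, γ.1 ≤ ν 0 ∧ γ.2 ≤ ν 1}
  zero_mem' := by simp
  add_mem' := by
    intro p q hp hq ν hν
    rcases Finset.mem_union.1 (MvPolynomial.support_add hν) with h | h
    exacts [hp ν h, hq ν h]
  smul_mem' := by
    intro c z hz ν hν
    rw [smul_eq_mul] at hν
    obtain ⟨ν1, hν1, ν2, hν2, rfl⟩ := Finset.mem_add.1 (MvPolynomial.support_mul c z hν)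
    obtain ⟨γ, hγ, h0, h1⟩ := hz ν2 hν2
    refine ⟨γ, hγ, ?_, ?_⟩ <;> simp [Finsupp.add_apply] <;> omega

lemma mem_up {A : Set (ℕ × ℕ)} {z : MvPolynomial (Fin 2) K} :
    z ∈ up K A ↔ ∀ ν ∈ z.support, ∃ γ ∈ A, γ.1 ≤ ν 0 ∧ γ.2 ≤ ν 1 := Iff.rfl

lemma up_mono {A B : Set (ℕ × ℕ)}
    (h : ∀ γ ∈ A, ∃ γ' ∈ B, γ'.1 ≤ γ.1 ∧ γ'.2 ≤ γ.2) : up K A ≤ up K B := by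
  intro z hz ν hν
  obtain ⟨γ, hγ, h0, h1⟩ := hz ν hν
  obtain ⟨γ', hγ', h0', h1'⟩ := h γ hγ
  exact ⟨γ', hγ', le_trans h0' h0, le_trans h1' h1⟩

lemma up_mul (A B : Set (ℕ × ℕ)) : up K A * up K B ≤ up K (A + B) := by
  refine Ideal.mul_le.2 fun p hp q hq => ?_
  intro ν hν
  obtain ⟨ν1, hν1, ν2, hν2, rfl⟩ := Finset.mem_add.1 (MvPolynomial.support_mul p q hν)
  obtain ⟨γ1, hγ1, h10, h11⟩ := hp ν1 hν1
  obtain ⟨γ2, hγ2, h20, h21⟩ := hq ν2 hν2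
  refine ⟨γ1 + γ2, Set.add_mem_add hγ1 hγ2, ?_, ?_⟩ <;>
    simp [Finsupp.add_apply, Prod.fst_add, Prod.snd_add] <;> omega

lemma support_XX (s t : ℕ) :
    (X 0 ^ s * X 1 ^ t : MvPolynomial (Fin 2) K).support
      = {Finsupp.single 0 s + Finsupp.single 1 t} := by
  classical
  rw [X_pow_eq_monomial, X_pow_eq_monomial, monomial_mul, support_monomial]
  simp

lemma coeff_X_pow_mul_eq_zero {i : Fin 2} {n : ℕ} {p : MvPolynomial (Fin 2) K}
    {ν : Fin 2 →₀ ℕ} (h : ν i < n) : coeff ν (X i ^ n * p) = 0 := by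
  by_contra hc
  have h2 := MvPolynomial.support_mul (X i ^ n) p (mem_support_iff.2 hc)
  rw [support_X_pow] at h2
  obtain ⟨ν1, hν1, ν2, hν2, rfl⟩ := Finset.mem_add.1 h2
  rw [Finset.mem_singleton] at hν1
  subst hν1
  have h3 : n ≤ (Finsupp.single i n + ν2) i := by simp
  omega

lemma coeff_X_pow_mul_eq_zero' (i : Fin 2) (n : ℕ) (p : MvPolynomial (Fin 2) K)
    (ν : Fin 2 →₀ ℕ) (h : ν i < n) : coeff ν (X i ^ n * p) = 0 :=
  coeff_X_pow_mul_eq_zero h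


/-- Exponent pairs of products of `k` generators of `I`. -/
def BI (a k : ℕ) : Set (ℕ × ℕ) :=
  {γ | ∃ e1 e2 e3 e4 : ℕ, e1 + e2 + e3 + e4 = k ∧
    γ.1 = (2*a+1)*e1 + (a+1)*e2 + a*e3 ∧ γ.2 = a*e2 + (a+1)*e3 + (2*a+1)*e4}

/-- Exponent pairs of products of `k` generators of `I`, at least one from `J`. -/
def BJ (a k : ℕ) : Set (ℕ × ℕ) :=
  {γ | ∃ e1 e2 e3 e4 : ℕ, e1 + e2 + e3 + e4 = k ∧ 1 ≤ e1 + e4 ∧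
    γ.1 = (2*a+1)*e1 + (a+1)*e2 + a*e3 ∧ γ.2 = a*e2 + (a+1)*e3 + (2*a+1)*e4}

lemma BI_add_BI (a k l : ℕ) : BI a k + BI a l ⊆ BI a (k + l) := by
  rintro γ ⟨γ1, ⟨e1,e2,e3,e4,hs,h1,h2⟩, γ2, ⟨f1,f2,f3,f4,hs',h1',h2'⟩, rfl⟩
  exact ⟨e1+f1, e2+f2, e3+f3, e4+f4, by omega,
    by simp [Prod.fst_add, h1, h1']; ring, by simp [Prod.snd_add, h2, h2']; ring⟩

lemma BJ_add_BI (a k l : ℕ) : BJ a k + BI a l ⊆ BJ a (k + l) := by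
  rintro γ ⟨γ1, ⟨e1,e2,e3,e4,hs,he,h1,h2⟩, γ2, ⟨f1,f2,f3,f4,hs',h1',h2'⟩, rfl⟩
  exact ⟨e1+f1, e2+f2, e3+f3, e4+f4, by omega, by omega,
    by simp [Prod.fst_add, h1, h1']; ring, by simp [Prod.snd_add, h2, h2']; ring⟩

lemma BI_deg (a k : ℕ) {γ : ℕ × ℕ} (h : γ ∈ BI a k) : γ.1 + γ.2 = (2*a+1) * k := by
  obtain ⟨e1,e2,e3,e4,hs,h1,h2⟩ := h
  subst hs; rw [h1, h2]; ring

lemma BJ_deg (a k : ℕ) {γ : ℕ × ℕ} (h : γ ∈ BJ a k) : γ.1 + γ.2 = (2*a+1) * k := by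
  obtain ⟨e1,e2,e3,e4,hs,_,h1,h2⟩ := h
  subst hs; rw [h1, h2]; ring

lemma XX_mem_up {A : Set (ℕ × ℕ)} (s t : ℕ) (h : (s, t) ∈ A) :
    (X 0 ^ s * X 1 ^ t : MvPolynomial (Fin 2) K) ∈ up K A := by
  intro ν hν
  rw [support_XX, Finset.mem_singleton] at hν
  subst hν
  exact ⟨(s, t), h, by simp, by simp⟩

lemma span_I_le_up (a : ℕ) :
    Ideal.span {(X 0 ^ (2*a+1) : MvPolynomial (Fin 2) K), X 0 ^ (a+1) * X 1 ^ a,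
      X 0 ^ a * X 1 ^ (a+1), X 1 ^ (2*a+1)} ≤ up K (BI a 1) := by
  rw [Ideal.span_le]
  have e1 : (X 0 ^ (2*a+1) : MvPolynomial (Fin 2) K) = X 0 ^ (2*a+1) * X 1 ^ 0 := by simp
  have e4 : (X 1 ^ (2*a+1) : MvPolynomial (Fin 2) K) = X 0 ^ 0 * X 1 ^ (2*a+1) := by simp
  rintro p (rfl | rfl | rfl | rfl)
  · rw [e1]; exact XX_mem_up _ _ ⟨1,0,0,0, by omega, by omega, by omega⟩
  · exact XX_mem_up _ _ ⟨0,1,0,0, by omega, by omega, by omega⟩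
  · exact XX_mem_up _ _ ⟨0,0,1,0, by omega, by omega, by omega⟩
  · rw [e4]; exact XX_mem_up _ _ ⟨0,0,0,1, by omega, by omega, by omega⟩

lemma span_J_le_up (a : ℕ) :
    Ideal.span {(X 0 ^ (2*a+1) : MvPolynomial (Fin 2) K), X 1 ^ (2*a+1)}
      ≤ up K (BJ a 1) := by
  rw [Ideal.span_le]
  have e1 : (X 0 ^ (2*a+1) : MvPolynomial (Fin 2) K) = X 0 ^ (2*a+1) * X 1 ^ 0 := by simp
  have e4 : (X 1 ^ (2*a+1) : MvPolynomial (Fin 2) K) = X 0 ^ 0 * X 1 ^ (2*a+1) := by simp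
  rintro p (rfl | rfl)
  · rw [e1]; exact XX_mem_up _ _ ⟨1,0,0,0, by omega, by omega, by omega, by omega⟩
  · rw [e4]; exact XX_mem_up _ _ ⟨0,0,0,1, by omega, by omega, by omega, by omega⟩


lemma pow_I_le_up (a k : ℕ) {I : Ideal (MvPolynomial (Fin 2) K)}
    (hle : I ≤ up K (BI a 1)) : I ^ k ≤ up K (BI a k) := by
  induction k with
  | zero =>
    rw [pow_zero, Ideal.one_eq_top]
    intro z _ ν _
    exact ⟨(0, 0), ⟨0,0,0,0, by omega, by omega, by omega⟩, by omega, by omega⟩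
  | succ n ih =>
    rw [pow_succ]
    calc I ^ n * I ≤ up K (BI a n) * up K (BI a 1) := Ideal.mul_mono ih hle
      _ ≤ up K (BI a n + BI a 1) := up_mul _ _
      _ ≤ up K (BI a (n + 1)) := up_mono fun γ hγ => ⟨γ, BI_add_BI a n 1 hγ, le_rfl, le_rfl⟩

lemma mul_JI_le_up (a k : ℕ) {I J : Ideal (MvPolynomial (Fin 2) K)}
    (hleI : I ≤ up K (BI a 1)) (hleJ : J ≤ up K (BJ a 1)) :
    J * I ^ k ≤ up K (BJ a (1 + k)) := by
  calc J * I ^ k ≤ up K (BJ a 1) * up K (BI a k) :=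
        Ideal.mul_mono hleJ (pow_I_le_up a k hleI)
    _ ≤ up K (BJ a 1 + BI a k) := up_mul _ _
    _ ≤ up K (BJ a (1 + k)) := up_mono fun γ hγ => ⟨γ, BJ_add_BI a 1 k hγ, le_rfl, le_rfl⟩

lemma arith_contra {a k e1 e2 e3 e4 : ℕ} (ha : 1 ≤ a) (hk : k ≤ a)
    (hs : e1 + e2 + e3 + e4 = k) (he : 1 ≤ e1 + e4)
    (hx : (2*a+1)*e1 + (a+1)*e2 + a*e3 ≤ a * k)
    (hy : a*e2 + (a+1)*e3 + (2*a+1)*e4 ≤ (a+1) * k) : False := by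
  subst hs
  -- from hx : a*e1 + e1 + e2 ≤ a*e4 ; from hy : a*e4 ≤ a*e1 + e1 + e2
  have E : a*e4 = a*e1 + e1 + e2 := by nlinarith
  have h4 : 1 ≤ e4 := by
    rcases Nat.eq_zero_or_pos e4 with h | h
    · subst h
      simp at E
      omega
    · omega
  have h14 : e1 < e4 := by
    by_contra hcon
    push_neg at hcon
    have : a * e4 ≤ a * e1 := Nat.mul_le_mul_left a hcon
    have he1 : e1 = 0 := by omega
    have he2 : e2 = 0 := by omega
    rw [he1, he2] at E
    simp at E
    rcases E with E | E <;> omega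
  have hfin : a * e1 + a ≤ a * e4 := by
    have h5 : a * (e1 + 1) ≤ a * e4 := Nat.mul_le_mul_left a h14
    rwa [Nat.mul_succ] at h5
  omega

section Part3

lemma const_zero_mem_span_X {p : MvPolynomial (Fin 2) K} (h : coeff 0 p = 0) :
    p ∈ Ideal.span ({X 0, X 1} : Set (MvPolynomial (Fin 2) K)) := by
  have himg : (X '' (Set.univ : Set (Fin 2)) : Set (MvPolynomial (Fin 2) K))
      = {X 0, X 1} := by
    rw [Set.image_univ]
    ext y
    simp [Fin.exists_fin_two, eq_comm]
  rw [← himg, mem_ideal_span_X_image]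
  intro m hm
  by_cases h0 : m 0 ≠ 0
  · exact ⟨0, Set.mem_univ _, h0⟩
  · push_neg at h0
    refine ⟨1, Set.mem_univ _, fun h1 => ?_⟩
    apply mem_support_iff.1 hm
    have hm0 : m = 0 := by
      ext i
      fin_cases i <;> simp [h0, h1]
    rwa [hm0]


lemma span_XY_pow (n : ℕ) :
    (Ideal.span ({X 0, X 1} : Set (MvPolynomial (Fin 2) K))) ^ n
      = Ideal.span {q | ∃ i j : ℕ, i + j = n ∧ q = X 0 ^ i * X 1 ^ j} := by
  induction n with
  | zero =>
    rw [pow_zero]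
    have hset : {q : MvPolynomial (Fin 2) K | ∃ i j : ℕ, i + j = 0 ∧ q = X 0 ^ i * X 1 ^ j}
        = {1} := by
      ext q
      constructor
      · rintro ⟨i, j, hij, rfl⟩
        have hi : i = 0 := by omega
        have hj : j = 0 := by omega
        simp [hi, hj]
      · rintro rfl
        exact ⟨0, 0, rfl, by simp⟩
    rw [hset, Ideal.span_singleton_one, Ideal.one_eq_top]
  | succ n ih =>
    rw [pow_succ, ih, Ideal.span_mul_span]
    apply le_antisymm <;> rw [Ideal.span_le]
    · rintro q hq
      rw [Set.mem_mul] at hq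
      obtain ⟨u, hu, v, hv, rfl⟩ := hq
      obtain ⟨i, j, hij, rfl⟩ := hu
      rcases hv with rfl | rfl
      · refine Ideal.subset_span ⟨i + 1, j, by omega, ?_⟩
        ring
      · refine Ideal.subset_span ⟨i, j + 1, by omega, ?_⟩
        ring
    · rintro q ⟨i, j, hij, rfl⟩
      rcases Nat.eq_zero_or_pos i with hi | hi
      · subst hi
        have hj : j = n + 1 := by omega
        subst hj
        have hq : (X 0 ^ 0 * X 1 ^ (n + 1) : MvPolynomial (Fin 2) K)
            = (X 0 ^ 0 * X 1 ^ n) * X 1 := by ring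
        rw [hq]
        refine Ideal.subset_span ?_
        rw [Set.mem_mul]
        exact ⟨X 0 ^ 0 * X 1 ^ n, ⟨0, n, by omega, rfl⟩, X 1, by simp, rfl⟩
      · obtain ⟨i', rfl⟩ : ∃ i', i = i' + 1 := ⟨i - 1, by omega⟩
        have hq : (X 0 ^ (i' + 1) * X 1 ^ j : MvPolynomial (Fin 2) K)
            = (X 0 ^ i' * X 1 ^ j) * X 0 := by ring
        rw [hq]
        refine Ideal.subset_span ?_
        rw [Set.mem_mul]
        exact ⟨X 0 ^ i' * X 1 ^ j, ⟨i', j, by omega, rfl⟩, X 0, by simp, rfl⟩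

lemma span_XY_pow_le (a k : ℕ) {I : Ideal (MvPolynomial (Fin 2) K)}
    (hfI : (X 0 : MvPolynomial (Fin 2) K) ^ (2 * a + 1) ∈ I)
    (hgI : (X 1 : MvPolynomial (Fin 2) K) ^ (2 * a + 1) ∈ I) :
    (Ideal.span ({X 0, X 1} : Set (MvPolynomial (Fin 2) K))) ^ (2 * (2 * a + 1) * k)
      ≤ I ^ k := by
  rw [span_XY_pow, Ideal.span_le]
  rintro q ⟨i, j, hij, rfl⟩
  have h2 : 2 * (2 * a + 1) * k = (2 * a + 1) * k + (2 * a + 1) * k := by ring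
  rw [h2] at hij
  rcases le_or_gt ((2 * a + 1) * k) i with hi | hi
  · obtain ⟨i', rfl⟩ : ∃ i', i = (2 * a + 1) * k + i' := ⟨i - (2 * a + 1) * k, by omega⟩
    rw [show (X 0 ^ ((2 * a + 1) * k + i') * X 1 ^ j : MvPolynomial (Fin 2) K)
        = (X 0 ^ (2 * a + 1)) ^ k * (X 0 ^ i' * X 1 ^ j) from by ring]
    exact Ideal.mul_mem_right _ _ (Ideal.pow_mem_pow hfI k)
  · obtain ⟨j', rfl⟩ : ∃ j', j = (2 * a + 1) * k + j' := ⟨j - (2 * a + 1) * k, by omega⟩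
    rw [show (X 0 ^ i * X 1 ^ ((2 * a + 1) * k + j') : MvPolynomial (Fin 2) K)
        = (X 1 ^ (2 * a + 1)) ^ k * (X 0 ^ i * X 1 ^ j') from by ring]
    exact Ideal.mul_mem_right _ _ (Ideal.pow_mem_pow hgI k)


lemma coeff_xpull (s t n : ℕ) (p : MvPolynomial (Fin 2) K) :
    coeff (Finsupp.single 0 (n + s) + Finsupp.single 1 t) (X 0 ^ n * p)
      = coeff (Finsupp.single 0 s + Finsupp.single 1 t) p := by
  rw [X_pow_eq_monomial]
  have hν : Finsupp.single (0 : Fin 2) (n + s) + Finsupp.single 1 t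
      = Finsupp.single 0 n + (Finsupp.single 0 s + Finsupp.single 1 t) := by
    rw [Finsupp.single_add, add_assoc]
  rw [hν, coeff_monomial_mul, one_mul]

lemma coeff_ypull (s t n : ℕ) (p : MvPolynomial (Fin 2) K) :
    coeff (Finsupp.single 0 s + Finsupp.single 1 (n + t)) (X 1 ^ n * p)
      = coeff (Finsupp.single 0 s + Finsupp.single 1 t) p := by
  rw [X_pow_eq_monomial]
  have hν : Finsupp.single (0 : Fin 2) s + Finsupp.single 1 (n + t)
      = Finsupp.single 1 n + (Finsupp.single 0 s + Finsupp.single 1 t) := by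
    rw [Finsupp.single_add, add_left_comm]
  rw [hν, coeff_monomial_mul, one_mul]

lemma line_false (a k : ℕ) (α β : K) (hβ : β ≠ 0) (r z : MvPolynomial (Fin 2) K)
    (hz : ∀ ν : Fin 2 →₀ ℕ, ν 0 + ν 1 ≤ (2 * a + 1) * (k + 1) → coeff ν z = 0)
    (heq : (X 0 : MvPolynomial (Fin 2) K) ^ ((2 * a + 1) * (k + 1))
      = r * (C α * X 0 ^ (2 * a + 1) + C β * X 1 ^ (2 * a + 1)) + z) : False := by
  have hd : (2 * a + 1) * (k + 1) = (2 * a + 1) + (2 * a + 1) * k := by ring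
  have hco : ∀ ν : Fin 2 →₀ ℕ, ν 0 + ν 1 ≤ (2 * a + 1) * (k + 1) →
      coeff ν ((X 0 : MvPolynomial (Fin 2) K) ^ ((2 * a + 1) * (k + 1)))
        = α * coeff ν (X 0 ^ (2 * a + 1) * r) + β * coeff ν (X 1 ^ (2 * a + 1) * r) := by
    intro ν hν
    have h1 : r * (C α * X 0 ^ (2 * a + 1) + C β * X 1 ^ (2 * a + 1))
        = C α * (X 0 ^ (2 * a + 1) * r) + C β * (X 1 ^ (2 * a + 1) * r) := by ring
    rw [heq, h1, coeff_add, coeff_add, coeff_C_mul, coeff_C_mul, hz ν hν, add_zero]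
  have hu : ∀ j, j ≤ k →
      coeff (Finsupp.single 0 ((2 * a + 1) * j)
        + Finsupp.single 1 ((2 * a + 1) * (k - j))) r = 0 := by
    intro j
    induction j with
    | zero =>
      intro _
      have h := hco (Finsupp.single 0 0 + Finsupp.single 1 ((2 * a + 1) + (2 * a + 1) * k))
        (by simp [Finsupp.add_apply, Finsupp.single_apply, hd.symm])
      rw [coeff_ypull, coeff_X_pow, if_neg, coeff_X_pow_mul_eq_zero, mul_zero, zero_add] at h
      · simp only [Nat.mul_zero, Nat.sub_zero]
        rcases mul_eq_zero.1 h.symm with h' | h'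
        · exact absurd h' hβ
        · exact h'
      · simp
      · intro hcon
        have := congrArg (fun s => s 1) hcon
        simp [Finsupp.single_apply] at this
        omega
    | succ n ih =>
      intro hn1
      have ihn := ih (by omega)
      have hx1 : (2 * a + 1) * (n + 1) = (2 * a + 1) + (2 * a + 1) * n := by ring
      have hy1 : (2 * a + 1) * (k - n) = (2 * a + 1) + (2 * a + 1) * (k - (n + 1)) := by
        rw [show k - n = (k - (n + 1)) + 1 from by omega]
        ring
      have hb : (2 * a + 1) * (n + 1) + (2 * a + 1) * (k - n) ≤ (2 * a + 1) * (k + 1) := by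
        rw [← Nat.mul_add]
        exact Nat.mul_le_mul_left _ (by omega)
      have h := hco (Finsupp.single 0 ((2 * a + 1) * (n + 1))
          + Finsupp.single 1 ((2 * a + 1) * (k - n)))
        (by simpa [Finsupp.add_apply, Finsupp.single_apply] using hb)
      rw [coeff_X_pow, if_neg] at h
      · nth_rewrite 1 [hx1] at h
        rw [coeff_xpull] at h
        nth_rewrite 2 [hy1] at h
        rw [coeff_ypull, ihn, mul_zero, zero_add] at h
        rcases mul_eq_zero.1 h.symm with h' | h'
        · exact absurd h' hβ
        · exact h'
      · intro hcon
        have h2 := congrArg (fun s => s 1) hcon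
        have hpos : 0 < (2 * a + 1) * (k - n) := Nat.mul_pos (by omega) (by omega)
        simp [Finsupp.single_apply] at h2
        omega
  -- final contradiction at the pure x monomial
  have h := hco (Finsupp.single 0 ((2 * a + 1) * (k + 1)) + Finsupp.single 1 0)
    (by simp [Finsupp.add_apply, Finsupp.single_apply])
  have hν : Finsupp.single (0 : Fin 2) ((2 * a + 1) * (k + 1))
      = Finsupp.single 0 ((2 * a + 1) * (k + 1)) + Finsupp.single 1 0 := by simp
  rw [coeff_X_pow, if_pos hν] at h
  nth_rewrite 1 [hd] at h
  rw [coeff_xpull,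
    coeff_X_pow_mul_eq_zero (by simp [Finsupp.add_apply, Finsupp.single_apply]),
    mul_zero, add_zero] at h
  have huk := hu k le_rfl
  rw [show k - k = 0 from by omega] at huk
  simp only [Nat.mul_zero] at huk
  rw [huk, mul_zero] at h
  exact one_ne_zero h


lemma line_false_y (a k : ℕ) (α : K) (r z : MvPolynomial (Fin 2) K)
    (hz : ∀ ν : Fin 2 →₀ ℕ, ν 0 + ν 1 ≤ (2 * a + 1) * (k + 1) → coeff ν z = 0)
    (heq : (X 1 : MvPolynomial (Fin 2) K) ^ ((2 * a + 1) * (k + 1))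
      = r * (C α * X 0 ^ (2 * a + 1) + C 0 * X 1 ^ (2 * a + 1)) + z) : False := by
  have h1 : r * (C α * X 0 ^ (2 * a + 1) + C 0 * X 1 ^ (2 * a + 1))
      = C α * (X 0 ^ (2 * a + 1) * r) := by
    rw [map_zero]; ring
  rw [h1] at heq
  have h := congrArg (coeff (Finsupp.single 1 ((2 * a + 1) * (k + 1)))) heq
  rw [coeff_X_pow, if_pos rfl, coeff_add, coeff_C_mul,
    coeff_X_pow_mul_eq_zero (by simp [Finsupp.single_apply]),
    hz _ (by simp [Finsupp.single_apply]), mul_zero, add_zero] at h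
  exact one_ne_zero h

lemma low_coeff_zero (a k : ℕ) {I J : Ideal (MvPolynomial (Fin 2) K)}
    (hJu : J ≤ up K (BJ a 1)) (hIu : I ≤ up K (BI a 1))
    {z : MvPolynomial (Fin 2) K}
    (hzm : z ∈ (Ideal.span ({X 0, X 1} : Set (MvPolynomial (Fin 2) K)) * J) * I ^ k) :
    ∀ ν : Fin 2 →₀ ℕ, ν 0 + ν 1 ≤ (2 * a + 1) * (k + 1) → coeff ν z = 0 := by
  have hm_up : Ideal.span ({X 0, X 1} : Set (MvPolynomial (Fin 2) K))
      ≤ up K {((1 : ℕ), (0 : ℕ)), (0, 1)} := by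
    rw [Ideal.span_le]
    rintro p (rfl | rfl)
    · rw [show (X 0 : MvPolynomial (Fin 2) K) = X 0 ^ 1 * X 1 ^ 0 from by simp]
      exact XX_mem_up _ _ (by simp)
    · rw [show (X 1 : MvPolynomial (Fin 2) K) = X 0 ^ 0 * X 1 ^ 1 from by simp]
      exact XX_mem_up _ _ (by simp)
  intro ν hν
  by_contra hc
  have h1 : (Ideal.span ({X 0, X 1} : Set (MvPolynomial (Fin 2) K)) * J) * I ^ k
      ≤ up K (({((1 : ℕ), (0 : ℕ)), (0, 1)} + BJ a 1) + BI a k) :=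
    le_trans (Ideal.mul_mono (le_trans (Ideal.mul_mono hm_up hJu) (up_mul _ _))
      (pow_I_le_up a k hIu)) (up_mul _ _)
  obtain ⟨γ, hγ, h0, h1'⟩ := h1 hzm ν (mem_support_iff.2 hc)
  obtain ⟨γ', hγ', γI, hγI, rfl⟩ := hγ
  obtain ⟨γm, hγm, γJ, hγJ, rfl⟩ := hγ'
  have hdJ := BJ_deg a 1 hγJ
  have hdI := BI_deg a k hγI
  rw [Nat.mul_one] at hdJ
  have hγm1 : γm.1 + γm.2 = 1 := by rcases hγm with rfl | rfl <;> simp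
  simp only [Prod.fst_add, Prod.snd_add] at h0 h1'
  rw [show (2 * a + 1) * (k + 1) = (2 * a + 1) + (2 * a + 1) * k from by ring] at hν
  generalize (2 * a + 1) * k = T at hdI hν
  omega

lemma part3 (a k : ℕ) (I J J' : Ideal (MvPolynomial (Fin 2) K))
    (hI : I = Ideal.span
      {X 0 ^ (2 * a + 1), X 0 ^ (a + 1) * X 1 ^ a, X 0 ^ a * X 1 ^ (a + 1),
        X 1 ^ (2 * a + 1)})
    (hJ : J = Ideal.span {X 0 ^ (2 * a + 1), X 1 ^ (2 * a + 1)})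
    (hJ'J : J' ≤ J) (hred : I ^ (k + 1) = J' * I ^ k) : J' = J := by
  have hfJ : (X 0 : MvPolynomial (Fin 2) K) ^ (2 * a + 1) ∈ J :=
    hJ ▸ Ideal.subset_span (by simp)
  have hgJ : (X 1 : MvPolynomial (Fin 2) K) ^ (2 * a + 1) ∈ J :=
    hJ ▸ Ideal.subset_span (by simp)
  have hfI : (X 0 : MvPolynomial (Fin 2) K) ^ (2 * a + 1) ∈ I :=
    hI ▸ Ideal.subset_span (by simp)
  have hgI : (X 1 : MvPolynomial (Fin 2) K) ^ (2 * a + 1) ∈ I :=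
    hI ▸ Ideal.subset_span (by simp)
  have hJu : J ≤ up K (BJ a 1) := hJ ▸ span_J_le_up a
  have hIu : I ≤ up K (BI a 1) := hI ▸ span_I_le_up a
  have hJI : J ≤ I := by
    rw [hJ, Ideal.span_le]
    rintro p (rfl | rfl) <;> assumption
  have hE : J * I ^ k = J' * I ^ k := by
    apply le_antisymm
    · calc J * I ^ k ≤ I * I ^ k := Ideal.mul_mono hJI le_rfl
        _ = I ^ (k + 1) := (pow_succ' I k).symm
        _ = J' * I ^ k := hred
    · exact Ideal.mul_mono hJ'J le_rfl
  have hJIkJ' : J * I ^ k ≤ J' := by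
    rw [hE]
    exact Ideal.mul_le_left
  -- decomposition of elements of J
  have claim1 : ∀ h ∈ J,
      h - coeff (Finsupp.single 0 (2 * a + 1)) h • (X 0 : MvPolynomial (Fin 2) K) ^ (2 * a + 1)
        - coeff (Finsupp.single 1 (2 * a + 1)) h • (X 1 : MvPolynomial (Fin 2) K) ^ (2 * a + 1)
        ∈ Ideal.span ({X 0, X 1} : Set (MvPolynomial (Fin 2) K)) * J := by
    intro h hh
    rw [hJ] at hh
    obtain ⟨p, q, hpq⟩ := Ideal.mem_span_pair.1 hh
    rw [← hpq]
    have hlam : coeff (Finsupp.single (0 : Fin 2) (2 * a + 1))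
        (p * X 0 ^ (2 * a + 1) + q * X 1 ^ (2 * a + 1)) = coeff 0 p := by
      rw [coeff_add]
      have hx : coeff (Finsupp.single (0 : Fin 2) (2 * a + 1)) (p * X 0 ^ (2 * a + 1))
          = coeff 0 p := by
        have h' := coeff_mul_monomial (0 : Fin 2 →₀ ℕ)
          (Finsupp.single (0 : Fin 2) (2 * a + 1)) (1 : K) p
        rw [zero_add, mul_one, ← X_pow_eq_monomial] at h'
        exact h'
      have hy : coeff (Finsupp.single (0 : Fin 2) (2 * a + 1)) (q * X 1 ^ (2 * a + 1)) = 0 := by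
        rw [mul_comm q (X 1 ^ (2 * a + 1))]
        exact coeff_X_pow_mul_eq_zero' 1 (2 * a + 1) q (Finsupp.single (0 : Fin 2) (2 * a + 1))
          (by rw [Finsupp.single_eq_of_ne' (show (0 : Fin 2) ≠ 1 by decide)]; omega)
      rw [hx, hy, add_zero]
    have hmu : coeff (Finsupp.single (1 : Fin 2) (2 * a + 1))
        (p * X 0 ^ (2 * a + 1) + q * X 1 ^ (2 * a + 1)) = coeff 0 q := by
      rw [coeff_add]
      have hx : coeff (Finsupp.single (1 : Fin 2) (2 * a + 1)) (p * X 0 ^ (2 * a + 1)) = 0 := by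
        rw [mul_comm p (X 0 ^ (2 * a + 1))]
        exact coeff_X_pow_mul_eq_zero' 0 (2 * a + 1) p (Finsupp.single (1 : Fin 2) (2 * a + 1))
          (by rw [Finsupp.single_eq_of_ne' (show (1 : Fin 2) ≠ 0 by decide)]; omega)
      have hy : coeff (Finsupp.single (1 : Fin 2) (2 * a + 1)) (q * X 1 ^ (2 * a + 1))
          = coeff 0 q := by
        have h' := coeff_mul_monomial (0 : Fin 2 →₀ ℕ)
          (Finsupp.single (1 : Fin 2) (2 * a + 1)) (1 : K) q
        rw [zero_add, mul_one, ← X_pow_eq_monomial] at h'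
        exact h'
      rw [hx, hy, zero_add]
    rw [hlam, hmu]
    have hrw : p * X 0 ^ (2 * a + 1) + q * X 1 ^ (2 * a + 1)
        - coeff 0 p • (X 0 : MvPolynomial (Fin 2) K) ^ (2 * a + 1)
        - coeff 0 q • (X 1 : MvPolynomial (Fin 2) K) ^ (2 * a + 1)
        = (p - C (coeff 0 p)) * X 0 ^ (2 * a + 1)
          + (q - C (coeff 0 q)) * X 1 ^ (2 * a + 1) := by
      rw [smul_eq_C_mul, smul_eq_C_mul]
      ring
    rw [hrw]
    exact Ideal.add_mem _
      (Ideal.mul_mem_mul (const_zero_mem_span_X (by simp [coeff_sub])) hfJ)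
      (Ideal.mul_mem_mul (const_zero_mem_span_X (by simp [coeff_sub])) hgJ)
  by_cases hdet : ∃ h1 ∈ J', ∃ h2 ∈ J',
      coeff (Finsupp.single 0 (2 * a + 1)) h1 * coeff (Finsupp.single 1 (2 * a + 1)) h2
        ≠ coeff (Finsupp.single 1 (2 * a + 1)) h1 * coeff (Finsupp.single 0 (2 * a + 1)) h2
  · obtain ⟨h1, hh1, h2, hh2, hD⟩ := hdet
    set L1 := coeff (Finsupp.single 0 (2 * a + 1)) h1 with hL1
    set M1 := coeff (Finsupp.single 1 (2 * a + 1)) h1 with hM1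
    set L2 := coeff (Finsupp.single 0 (2 * a + 1)) h2 with hL2
    set M2 := coeff (Finsupp.single 1 (2 * a + 1)) h2 with hM2
    have hDK : L1 * M2 - M1 * L2 ≠ 0 := sub_ne_zero.2 hD
    have hgen : ∀ c1 c2 : K,
        (C c1 * h1 - C c2 * h2 ∈ J') ∧
        coeff (Finsupp.single 0 (2 * a + 1)) (C c1 * h1 - C c2 * h2) = c1 * L1 - c2 * L2 ∧
        coeff (Finsupp.single 1 (2 * a + 1)) (C c1 * h1 - C c2 * h2) = c1 * M1 - c2 * M2 := by
      intro c1 c2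
      exact ⟨Submodule.sub_mem _ (Ideal.mul_mem_left _ _ hh1) (Ideal.mul_mem_left _ _ hh2),
        by rw [coeff_sub, coeff_C_mul, coeff_C_mul],
        by rw [coeff_sub, coeff_C_mul, coeff_C_mul]⟩
    have hmemf : (X 0 : MvPolynomial (Fin 2) K) ^ (2 * a + 1)
        ∈ J' ⊔ Ideal.span ({X 0, X 1} : Set (MvPolynomial (Fin 2) K)) * J := by
      obtain ⟨hm, hcl, hcm⟩ := hgen ((L1 * M2 - M1 * L2)⁻¹ * M2) ((L1 * M2 - M1 * L2)⁻¹ * M1)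
      have hcl1 : (L1 * M2 - M1 * L2)⁻¹ * M2 * L1 - (L1 * M2 - M1 * L2)⁻¹ * M1 * L2 = 1 := by
        field_simp
      have hcm0 : (L1 * M2 - M1 * L2)⁻¹ * M2 * M1 - (L1 * M2 - M1 * L2)⁻¹ * M1 * M2 = 0 := by
        ring
      have hdec := claim1 _ (hJ'J hm)
      rw [hcl, hcm, hcl1, hcm0, one_smul, zero_smul, sub_zero] at hdec
      exact Submodule.mem_sup.2 ⟨_, hm,
        -((C ((L1 * M2 - M1 * L2)⁻¹ * M2) * h1 - C ((L1 * M2 - M1 * L2)⁻¹ * M1) * h2)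
          - X 0 ^ (2 * a + 1)), neg_mem hdec, by ring⟩
    have hmemg : (X 1 : MvPolynomial (Fin 2) K) ^ (2 * a + 1)
        ∈ J' ⊔ Ideal.span ({X 0, X 1} : Set (MvPolynomial (Fin 2) K)) * J := by
      obtain ⟨hm, hcl, hcm⟩ := hgen (-((L1 * M2 - M1 * L2)⁻¹ * L2)) (-((L1 * M2 - M1 * L2)⁻¹ * L1))
      have hcl1 : -((L1 * M2 - M1 * L2)⁻¹ * L2) * L1 - -((L1 * M2 - M1 * L2)⁻¹ * L1) * L2 = 0 := by
        ring
      have hcm0 : -((L1 * M2 - M1 * L2)⁻¹ * L2) * M1 - -((L1 * M2 - M1 * L2)⁻¹ * L1) * M2 = 1 := by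
        field_simp
        ring
      have hdec := claim1 _ (hJ'J hm)
      rw [hcl, hcm, hcl1, hcm0, one_smul, zero_smul] at hdec
      have hdec2 : (C (-((L1 * M2 - M1 * L2)⁻¹ * L2)) * h1
          - C (-((L1 * M2 - M1 * L2)⁻¹ * L1)) * h2) - X 1 ^ (2 * a + 1)
          ∈ Ideal.span ({X 0, X 1} : Set (MvPolynomial (Fin 2) K)) * J := by
        have heq2 : (C (-((L1 * M2 - M1 * L2)⁻¹ * L2)) * h1
            - C (-((L1 * M2 - M1 * L2)⁻¹ * L1)) * h2) - X 1 ^ (2 * a + 1)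
            = (C (-((L1 * M2 - M1 * L2)⁻¹ * L2)) * h1
            - C (-((L1 * M2 - M1 * L2)⁻¹ * L1)) * h2) - 0 - X 1 ^ (2 * a + 1) := by ring
        rw [heq2]
        exact hdec
      exact Submodule.mem_sup.2 ⟨_, hm,
        -((C (-((L1 * M2 - M1 * L2)⁻¹ * L2)) * h1 - C (-((L1 * M2 - M1 * L2)⁻¹ * L1)) * h2)
          - X 1 ^ (2 * a + 1)), neg_mem hdec2, by ring⟩
    have hJle : J ≤ J' ⊔ Ideal.span ({X 0, X 1} : Set (MvPolynomial (Fin 2) K)) * J := by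
      conv_lhs => rw [hJ]
      rw [Ideal.span_le]
      rintro p (rfl | rfl)
      · exact hmemf
      · exact hmemg
    have nak : ∀ t : ℕ,
        J ≤ J' ⊔ (Ideal.span ({X 0, X 1} : Set (MvPolynomial (Fin 2) K))) ^ t * J := by
      intro t
      induction t with
      | zero =>
        rw [pow_zero, one_mul]
        exact le_sup_right
      | succ n ih =>
        refine le_trans ih (sup_le le_sup_left ?_)
        calc (Ideal.span ({X 0, X 1} : Set (MvPolynomial (Fin 2) K))) ^ n * J
            ≤ (Ideal.span ({X 0, X 1} : Set (MvPolynomial (Fin 2) K))) ^ n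
              * (J' ⊔ Ideal.span ({X 0, X 1} : Set (MvPolynomial (Fin 2) K)) * J) :=
              Ideal.mul_mono le_rfl hJle
          _ = (Ideal.span ({X 0, X 1} : Set (MvPolynomial (Fin 2) K))) ^ n * J'
              ⊔ (Ideal.span ({X 0, X 1} : Set (MvPolynomial (Fin 2) K))) ^ n
                * (Ideal.span ({X 0, X 1} : Set (MvPolynomial (Fin 2) K)) * J) :=
              Ideal.mul_sup _ _ _
          _ ≤ J' ⊔ (Ideal.span ({X 0, X 1} : Set (MvPolynomial (Fin 2) K))) ^ (n + 1) * J := by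
              refine sup_le (le_sup_of_le_left Ideal.mul_le_right) (le_sup_of_le_right ?_)
              rw [← mul_assoc, ← pow_succ]
    have hmN : (Ideal.span ({X 0, X 1} : Set (MvPolynomial (Fin 2) K))) ^ (2 * (2 * a + 1) * k)
        * J ≤ J' := by
      calc (Ideal.span ({X 0, X 1} : Set (MvPolynomial (Fin 2) K))) ^ (2 * (2 * a + 1) * k) * J
          ≤ I ^ k * J := Ideal.mul_mono (span_XY_pow_le a k hfI hgI) le_rfl
        _ = J * I ^ k := mul_comm _ _
        _ ≤ J' := hJIkJ'
    exact le_antisymm hJ'J (le_trans (nak (2 * (2 * a + 1) * k)) (sup_le le_rfl hmN))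
  · push_neg at hdet
    obtain ⟨α, β, hαβ, hLP⟩ : ∃ α β : K, (β ≠ 0 ∨ (β = 0 ∧ α ≠ 0)) ∧ ∀ h ∈ J', ∃ t : K,
        coeff (Finsupp.single 0 (2 * a + 1)) h = t * α ∧
        coeff (Finsupp.single 1 (2 * a + 1)) h = t * β := by
      by_cases hz : ∀ h ∈ J', coeff (Finsupp.single (0 : Fin 2) (2 * a + 1)) h = 0 ∧
          coeff (Finsupp.single (1 : Fin 2) (2 * a + 1)) h = 0
      · exact ⟨0, 1, Or.inl one_ne_zero,
          fun h hh => ⟨0, by rw [(hz h hh).1, zero_mul], by rw [(hz h hh).2, zero_mul]⟩⟩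
      · push_neg at hz
        obtain ⟨w, hw, hne⟩ := hz
        set A := coeff (Finsupp.single (0 : Fin 2) (2 * a + 1)) w with hA
        set B := coeff (Finsupp.single (1 : Fin 2) (2 * a + 1)) w with hB
        refine ⟨A, B, ?_, ?_⟩
        · by_cases hb : B = 0
          · exact Or.inr ⟨hb, fun haz => hne haz hb⟩
          · exact Or.inl hb
        · intro h hh
          set A' := coeff (Finsupp.single (0 : Fin 2) (2 * a + 1)) h with hA'
          set B' := coeff (Finsupp.single (1 : Fin 2) (2 * a + 1)) h with hB'
          have hrel : A * B' = B * A' := hdet w hw h hh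
          by_cases hα : A = 0
          · have hβne : B ≠ 0 := hne hα
            refine ⟨B' / B, ?_, by field_simp⟩
            rw [hα, mul_zero]
            rw [hα, zero_mul] at hrel
            rcases mul_eq_zero.1 hrel.symm with h' | h'
            · exact absurd h' hβne
            · exact h'
          · refine ⟨A' / A, by field_simp, ?_⟩
            field_simp
            linear_combination hrel
    have hline : J' ≤ Ideal.span {C α * (X 0 : MvPolynomial (Fin 2) K) ^ (2 * a + 1)
        + C β * X 1 ^ (2 * a + 1)}
        ⊔ Ideal.span ({X 0, X 1} : Set (MvPolynomial (Fin 2) K)) * J := by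
      intro h hh
      obtain ⟨t, ht1, ht2⟩ := hLP h hh
      have hdec : h = C t * (C α * X 0 ^ (2 * a + 1) + C β * X 1 ^ (2 * a + 1))
          + (h - coeff (Finsupp.single 0 (2 * a + 1)) h
              • (X 0 : MvPolynomial (Fin 2) K) ^ (2 * a + 1)
            - coeff (Finsupp.single 1 (2 * a + 1)) h
              • (X 1 : MvPolynomial (Fin 2) K) ^ (2 * a + 1)) := by
        rw [ht1, ht2, smul_eq_C_mul, smul_eq_C_mul, C_mul, C_mul]
        ring
      rw [hdec]
      exact Submodule.add_mem _
        (Submodule.mem_sup_left (Ideal.mul_mem_left _ _ (Ideal.subset_span rfl)))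
        (Submodule.mem_sup_right (claim1 h (hJ'J hh)))
    have hsplit : ∀ w ∈ J * I ^ k,
        w ∈ Ideal.span {C α * (X 0 : MvPolynomial (Fin 2) K) ^ (2 * a + 1)
          + C β * X 1 ^ (2 * a + 1)}
          ⊔ (Ideal.span ({X 0, X 1} : Set (MvPolynomial (Fin 2) K)) * J) * I ^ k := by
      intro w hw
      have hchain : J * I ^ k ≤ Ideal.span {C α * (X 0 : MvPolynomial (Fin 2) K) ^ (2 * a + 1)
          + C β * X 1 ^ (2 * a + 1)}
          ⊔ (Ideal.span ({X 0, X 1} : Set (MvPolynomial (Fin 2) K)) * J) * I ^ k := by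
        calc J * I ^ k = J' * I ^ k := hE
          _ ≤ (Ideal.span {C α * (X 0 : MvPolynomial (Fin 2) K) ^ (2 * a + 1)
              + C β * X 1 ^ (2 * a + 1)}
              ⊔ Ideal.span ({X 0, X 1} : Set (MvPolynomial (Fin 2) K)) * J) * I ^ k :=
              Ideal.mul_mono hline le_rfl
          _ = Ideal.span {C α * (X 0 : MvPolynomial (Fin 2) K) ^ (2 * a + 1)
              + C β * X 1 ^ (2 * a + 1)} * I ^ k
              ⊔ (Ideal.span ({X 0, X 1} : Set (MvPolynomial (Fin 2) K)) * J) * I ^ k :=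
              Ideal.sup_mul _ _ _
          _ ≤ _ := sup_le (le_sup_of_le_left Ideal.mul_le_left) le_sup_right
      exact hchain hw
    exfalso
    rcases hαβ with hβ | ⟨hβ0, hα⟩
    · have hxd : (X 0 : MvPolynomial (Fin 2) K) ^ ((2 * a + 1) * (k + 1)) ∈ J * I ^ k := by
        rw [show ((X 0 : MvPolynomial (Fin 2) K) ^ ((2 * a + 1) * (k + 1)))
            = X 0 ^ (2 * a + 1) * (X 0 ^ (2 * a + 1)) ^ k from by ring]
        exact Ideal.mul_mem_mul hfJ (Ideal.pow_mem_pow hfI k)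
      obtain ⟨u, hu, z, hzmem, huz⟩ := Submodule.mem_sup.1 (hsplit _ hxd)
      obtain ⟨r, hr⟩ := Ideal.mem_span_singleton'.1 hu
      exact line_false a k α β hβ r z (low_coeff_zero a k hJu hIu hzmem)
        (by rw [← huz, ← hr])
    · subst hβ0
      have hyd : (X 1 : MvPolynomial (Fin 2) K) ^ ((2 * a + 1) * (k + 1)) ∈ J * I ^ k := by
        rw [show ((X 1 : MvPolynomial (Fin 2) K) ^ ((2 * a + 1) * (k + 1)))
            = X 1 ^ (2 * a + 1) * (X 1 ^ (2 * a + 1)) ^ k from by ring]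
        exact Ideal.mul_mem_mul hgJ (Ideal.pow_mem_pow hgI k)
      obtain ⟨u, hu, z, hzmem, huz⟩ := Submodule.mem_sup.1 (hsplit _ hyd)
      obtain ⟨r, hr⟩ := Ideal.mem_span_singleton'.1 hu
      exact line_false_y a k α r z (low_coeff_zero a k hJu hIu hzmem)
        (by rw [← huz, ← hr])

end Part3

section Part1

variable (a : ℕ)

lemma part1 (I J : Ideal (MvPolynomial (Fin 2) K))
    (hI : I = Ideal.span
      {X 0 ^ (2 * a + 1), X 0 ^ (a + 1) * X 1 ^ a, X 0 ^ a * X 1 ^ (a + 1),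
        X 1 ^ (2 * a + 1)})
    (hJ : J = Ideal.span {X 0 ^ (2 * a + 1), X 1 ^ (2 * a + 1)}) :
    I ^ (a + 1) = J * I ^ a := by
  set f : MvPolynomial (Fin 2) K := X 0 ^ (2 * a + 1) with hf
  set g : MvPolynomial (Fin 2) K := X 1 ^ (2 * a + 1) with hg
  set m2 : MvPolynomial (Fin 2) K := X 0 ^ (a + 1) * X 1 ^ a with hm2
  set m3 : MvPolynomial (Fin 2) K := X 0 ^ a * X 1 ^ (a + 1) with hm3
  set P : Ideal (MvPolynomial (Fin 2) K) := Ideal.span {m2, m3} with hP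
  have hfI : f ∈ I := by rw [hI]; exact Ideal.subset_span (by simp)
  have hgI : g ∈ I := by rw [hI]; exact Ideal.subset_span (by simp)
  have hm2I : m2 ∈ I := by rw [hI]; exact Ideal.subset_span (by simp)
  have hm3I : m3 ∈ I := by rw [hI]; exact Ideal.subset_span (by simp)
  have hfJ : f ∈ J := by rw [hJ]; exact Ideal.subset_span (by simp)
  have hgJ : g ∈ J := by rw [hJ]; exact Ideal.subset_span (by simp)
  have hJI : J ≤ I := by
    rw [hJ, Ideal.span_le]; rintro p (rfl | rfl) <;> assumption
  have hPI : P ≤ I := by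
    rw [hP, Ideal.span_le]; rintro p (rfl | rfl) <;> assumption
  have hIJP : I = J ⊔ P := by
    rw [hI, hJ, hP]
    have hset : ({f, m2, m3, g} : Set (MvPolynomial (Fin 2) K))
        = {f, g} ∪ {m2, m3} := by
      ext x; simp; tauto
    rw [hset, Ideal.span_union]
  -- claim 1
  have claim1 : ∀ j i : ℕ, P ^ (i + 1) * I ^ j ≤ J * I ^ (i + j) ⊔ P ^ (i + j + 1) := by
    intro j
    induction j with
    | zero =>
      intro i
      rw [pow_zero, mul_one, Nat.add_zero]
      exact le_sup_right
    | succ n ih =>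
      intro i
      have step : P ^ (i + 1) * I ^ (n + 1) = (P ^ (i + 1) * I ^ n) * I := by
        rw [mul_assoc, ← pow_succ]
      rw [step]
      calc (P ^ (i + 1) * I ^ n) * I
          ≤ (J * I ^ (i + n) ⊔ P ^ (i + n + 1)) * I := Ideal.mul_mono (ih i) le_rfl
        _ = J * I ^ (i + n) * I ⊔ P ^ (i + n + 1) * I := Ideal.sup_mul _ _ _
        _ ≤ J * I ^ (i + (n + 1)) ⊔ P ^ (i + (n + 1) + 1) := by
            apply sup_le
            · rw [mul_assoc, ← pow_succ]
              exact le_sup_left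
            · nth_rewrite 1 [hIJP]
              rw [Ideal.mul_sup]
              apply sup_le
              · calc P ^ (i + n + 1) * J ≤ I ^ (i + n + 1) * J :=
                      Ideal.mul_mono (Ideal.pow_right_mono hPI _) le_rfl
                  _ = J * I ^ (i + (n + 1)) := by rw [mul_comm]; ring_nf
                  _ ≤ _ := le_sup_left
              · rw [← pow_succ]
                exact le_sup_right
  -- claim 2
  have claim2 : ∀ j : ℕ, P ^ (j + 1) ≤
      Ideal.span {m2 ^ (j + 1)} ⊔ Ideal.span {m3 ^ (j + 1)} ⊔ J * I ^ j := by
    intro j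
    induction j with
    | zero =>
      rw [pow_one, hP]
      have : Ideal.span ({m2, m3} : Set (MvPolynomial (Fin 2) K))
          = Ideal.span {m2} ⊔ Ideal.span {m3} := by
        rw [Ideal.span_insert]
      rw [this]
      exact sup_le (le_sup_of_le_left (by simp [pow_one]))
        (le_sup_of_le_left (by simp [pow_one]))
    | succ n ih =>
      have hPsplit : P = Ideal.span {m2} ⊔ Ideal.span {m3} := by
        rw [hP, Ideal.span_insert]
      have hm2m3 : ∀ c : MvPolynomial (Fin 2) K, c = m2 ∨ c = m3 →
          Ideal.span {m2 ^ (n + 1)} * Ideal.span {c} ≤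
            Ideal.span {m2 ^ (n + 2)} ⊔ J * I ^ (n + 1) := by
        rintro c (rfl | rfl)
        · rw [Ideal.span_singleton_mul_span_singleton, ← pow_succ]
          exact le_sup_left
        · rw [Ideal.span_singleton_mul_span_singleton]
          refine le_sup_of_le_right ?_
          rw [Ideal.span_le, Set.singleton_subset_iff]
          have hid : m2 ^ (n + 1) * m3 = f * (m2 ^ n * g) := by
            rw [hm2, hm3, hf, hg]; ring
          rw [hid]
          exact Ideal.mul_mem_mul hfJ
            (by rw [pow_succ]; exact Ideal.mul_mem_mul (Ideal.pow_mem_pow hm2I n) hgI)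
      have hm3m : ∀ c : MvPolynomial (Fin 2) K, c = m2 ∨ c = m3 →
          Ideal.span {m3 ^ (n + 1)} * Ideal.span {c} ≤
            Ideal.span {m3 ^ (n + 2)} ⊔ J * I ^ (n + 1) := by
        rintro c (rfl | rfl)
        · rw [Ideal.span_singleton_mul_span_singleton]
          refine le_sup_of_le_right ?_
          rw [Ideal.span_le, Set.singleton_subset_iff]
          have hid : m3 ^ (n + 1) * m2 = f * (m3 ^ n * g) := by
            rw [hm2, hm3, hf, hg]; ring
          rw [hid]
          exact Ideal.mul_mem_mul hfJ
            (by rw [pow_succ]; exact Ideal.mul_mem_mul (Ideal.pow_mem_pow hm3I n) hgI)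
        · rw [Ideal.span_singleton_mul_span_singleton, ← pow_succ]
          exact le_sup_left
      calc P ^ (n + 2) = P ^ (n + 1) * P := by rw [pow_succ]
        _ ≤ (Ideal.span {m2 ^ (n + 1)} ⊔ Ideal.span {m3 ^ (n + 1)} ⊔ J * I ^ n) * P :=
            Ideal.mul_mono ih le_rfl
        _ = Ideal.span {m2 ^ (n + 1)} * P ⊔ Ideal.span {m3 ^ (n + 1)} * P
              ⊔ (J * I ^ n) * P := by rw [Ideal.sup_mul, Ideal.sup_mul]
        _ ≤ _ := by
            refine sup_le (sup_le ?_ ?_) ?_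
            · rw [hPsplit, Ideal.mul_sup]
              refine sup_le ?_ ?_
              · exact (hm2m3 m2 (Or.inl rfl)).trans
                  (sup_le (le_sup_of_le_left le_sup_left) le_sup_right)
              · exact (hm2m3 m3 (Or.inr rfl)).trans
                  (sup_le (le_sup_of_le_left le_sup_left) le_sup_right)
            · rw [hPsplit, Ideal.mul_sup]
              refine sup_le ?_ ?_
              · exact (hm3m m2 (Or.inl rfl)).trans
                  (sup_le (le_sup_of_le_left le_sup_right) le_sup_right)
              · exact (hm3m m3 (Or.inr rfl)).trans
                  (sup_le (le_sup_of_le_left le_sup_right) le_sup_right)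
            · refine le_sup_of_le_right ?_
              rw [mul_assoc]
              exact Ideal.mul_mono le_rfl (by rw [pow_succ]; exact Ideal.mul_mono le_rfl hPI)
  -- final assembly
  apply le_antisymm
  · have h1 : I ^ (a + 1) = I ^ a * I := pow_succ I a
    rw [h1]
    nth_rewrite 2 [hIJP]
    rw [Ideal.mul_sup]
    apply sup_le
    · rw [mul_comm]
    · have h2 : I ^ a * P = P ^ (0 + 1) * I ^ a := by rw [mul_comm, pow_one]
      rw [h2]
      refine (claim1 a 0).trans (sup_le ?_ ?_)
      · rw [Nat.zero_add]
      · have h3 : P ^ (0 + a + 1) ≤ Ideal.span {m2 ^ (a + 1)} ⊔ Ideal.span {m3 ^ (a + 1)}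
            ⊔ J * I ^ a := by
          have := claim2 a
          simpa using this
        refine h3.trans (sup_le (sup_le ?_ ?_) le_rfl)
        · rw [Ideal.span_le, Set.singleton_subset_iff]
          have hid : m2 ^ (a + 1) = f * m3 ^ a := by rw [hm2, hm3, hf]; ring
          rw [hid]
          exact Ideal.mul_mem_mul hfJ (Ideal.pow_mem_pow hm3I a)
        · rw [Ideal.span_le, Set.singleton_subset_iff]
          have hid : m3 ^ (a + 1) = g * m2 ^ a := by rw [hm2, hm3, hg]; ring
          rw [hid]
          exact Ideal.mul_mem_mul hgJ (Ideal.pow_mem_pow hm2I a)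
  · calc J * I ^ a ≤ I * I ^ a := Ideal.mul_mono hJI le_rfl
      _ = I ^ (a + 1) := (pow_succ' I a).symm

end Part1

end Stmt16Aux


open Stmt16Aux in
/-- **Theorem 3.4.** Let `a ≥ 1`, let
`I = (x^(2a+1), x^(a+1) y^a, x^a y^(a+1), y^(2a+1)) ⊆ K[x,y]` and
`J = (x^(2a+1), y^(2a+1))`.  Then `J` is a minimal reduction ideal of `I` with
reduction number `r_J(I) = a`: `I^(a+1) = J·I^a`, `I^k ≠ J·I^(k-1)` for all
`1 ≤ k ≤ a` — in fact `(x^a y^(a+1))^k ∈ I^k \ J·I^(k-1)` for all such `k` — and no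
ideal strictly contained in `J` is a reduction ideal of `I`. -/
theorem stmt_16 (K : Type) [Field K] (a : ℕ) (ha : 1 ≤ a)
    (I J : Ideal (MvPolynomial (Fin 2) K))
    (hI : I = Ideal.span
      {X 0 ^ (2 * a + 1), X 0 ^ (a + 1) * X 1 ^ a, X 0 ^ a * X 1 ^ (a + 1),
        X 1 ^ (2 * a + 1)})
    (hJ : J = Ideal.span {X 0 ^ (2 * a + 1), X 1 ^ (2 * a + 1)}) :
    I ^ (a + 1) = J * I ^ a ∧
    (∀ k, 1 ≤ k → k ≤ a →
      I ^ k ≠ J * I ^ (k - 1) ∧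
      (X 0 ^ a * X 1 ^ (a + 1)) ^ k ∈ I ^ k ∧
      (X 0 ^ a * X 1 ^ (a + 1)) ^ k ∉ J * I ^ (k - 1)) ∧
    (∀ J' : Ideal (MvPolynomial (Fin 2) K), J' ≤ J →
      (∃ k : ℕ, I ^ (k + 1) = J' * I ^ k) → J' = J) := by
  refine ⟨part1 a I J hI hJ, fun k hk1 hka => ?_, ?_⟩
  · have hm3I : (X 0 ^ a * X 1 ^ (a + 1) : MvPolynomial (Fin 2) K) ∈ I :=
      hI ▸ Ideal.subset_span (by simp)
    have hmem : (X 0 ^ a * X 1 ^ (a + 1) : MvPolynomial (Fin 2) K) ^ k ∈ I ^ k :=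
      Ideal.pow_mem_pow hm3I k
    have hnot : (X 0 ^ a * X 1 ^ (a + 1) : MvPolynomial (Fin 2) K) ^ k ∉ J * I ^ (k - 1) := by
      obtain ⟨k', rfl⟩ : ∃ k', k = k' + 1 := ⟨k - 1, by omega⟩
      intro hmem'
      rw [Nat.add_sub_cancel] at hmem'
      have h2 := mul_JI_le_up a k' (hI ▸ span_I_le_up a) (hJ ▸ span_J_le_up a) hmem'
      rw [show ((X 0 ^ a * X 1 ^ (a + 1) : MvPolynomial (Fin 2) K) ^ (k' + 1))
          = X 0 ^ (a * (k' + 1)) * X 1 ^ ((a + 1) * (k' + 1)) from by ring] at h2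
      have hsup : Finsupp.single (0 : Fin 2) (a * (k' + 1))
          + Finsupp.single 1 ((a + 1) * (k' + 1))
          ∈ (X 0 ^ (a * (k' + 1)) * X 1 ^ ((a + 1) * (k' + 1))
            : MvPolynomial (Fin 2) K).support := by
        rw [support_XX]
        exact Finset.mem_singleton_self _
      obtain ⟨γ, hγ, hx, hy⟩ := h2 _ hsup
      obtain ⟨e1, e2, e3, e4, hs, he, h1', h2'⟩ := hγ
      have hν0 : ((Finsupp.single (0 : Fin 2) (a * (k' + 1))
          + Finsupp.single 1 ((a + 1) * (k' + 1)) : Fin 2 →₀ ℕ)) 0 = a * (k' + 1) := by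
        simp [Finsupp.add_apply, Finsupp.single_apply]
      have hν1 : ((Finsupp.single (0 : Fin 2) (a * (k' + 1))
          + Finsupp.single 1 ((a + 1) * (k' + 1)) : Fin 2 →₀ ℕ)) 1 = (a + 1) * (k' + 1) := by
        simp [Finsupp.add_apply, Finsupp.single_apply]
      rw [hν0, h1'] at hx
      rw [hν1, h2'] at hy
      exact arith_contra ha hka (by omega) he hx hy
    exact ⟨fun heq => hnot (heq ▸ hmem), hmem, hnot⟩
  · rintro J' hle ⟨k, hk⟩
    exact part3 a k I J J' hI hJ hle hk
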